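/- arXiv:1109.3418 — 2 statements merged into one kernel-verified Lean document; each statement's English description precedes it below -/
import Mathlib

section
/- For integers k ≥ 5 with N₁ leaves blocking, if (k−1)·N₁ ≤ (k−1)(∑(d_V−2) + r) + ∑(k−d_V) + s and N₁ > (k−4)∑(d_V−1) + (k−3)r + s − 2, where each d_V ≥ 2, r ≥ 1, s ≥ 0 are integers, then ∑(k²−6k+6)(d_V−1) + (k²−5k+5)r + (k−2)s − 2(k−1) < 0. -/
/-!
Write `D = ∑ (d_V - 1)`. Both hypotheses are linear in `N₁`; eliminating `N₁` gives
`(k² - 6k + 6) D + (k - 1)(k - 4) r + (k - 2) s ≤ k - 1`. For `k ≥ 5` every coefficient on the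
left is positive, so this forces `4 r ≤ k - 1`, and the target expression is at most
`r - (k - 1) < 0`.
-/

open Finset

lemma sum_sub_two_eq_sum_sub_one_sub_card {ι : Type*} [Fintype ι] (d : ι → ℤ) :
    ∑ i, (d i - 2) = ∑ i, (d i - 1) - Fintype.card ι := by
  simp only [sum_sub_distrib, sum_const, card_univ, nsmul_eq_mul, mul_one]
  ring

lemma sum_const_sub_eq {ι : Type*} [Fintype ι] (d : ι → ℤ) (k : ℤ) :
    ∑ i, (k - d i) = (k - 1) * Fintype.card ι - ∑ i, (d i - 1) := by
  simp only [sum_sub_distrib, sum_const, card_univ, nsmul_eq_mul, mul_one]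
  ring

lemma lt_zero_of_bounds_on_leaf_count {k D r s N : ℤ} (hk : 5 ≤ k) (hD : 0 ≤ D) (hr : 0 ≤ r) (hs : 0 ≤ s)
    (h1 : (k - 1) * N ≤ (k - 2) * D + (k - 1) * r + s)
    (h2 : (k - 4) * D + (k - 3) * r + s - 2 < N) :
    (k ^ 2 - 6 * k + 6) * D + (k ^ 2 - 5 * k + 5) * r + (k - 2) * s - 2 * (k - 1) < 0 := by
  have hN : (k - 1) * ((k - 4) * D + (k - 3) * r + s - 1) ≤ (k - 2) * D + (k - 1) * r + s :=
    (mul_le_mul_of_nonneg_left (by omega) (by omega)).trans h1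
  have elim : (k ^ 2 - 6 * k + 6) * D + (k - 1) * (k - 4) * r + (k - 2) * s ≤ k - 1 := by
    linear_combination hN
  have hDcoef : 0 ≤ (k ^ 2 - 6 * k + 6) * D := mul_nonneg (by nlinarith) hD
  have hrcoef : 4 * r ≤ (k - 1) * (k - 4) * r :=
    mul_le_mul_of_nonneg_right (by nlinarith) hr
  have hscoef : 0 ≤ (k - 2) * s := mul_nonneg (by omega) hs
  linarith

theorem stmt7_general {ι : Type*} [Fintype ι] (d : ι → ℤ) (hd : ∀ i, 2 ≤ d i)
    (k N₁ r s : ℕ) (hk : 5 ≤ k)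
    (h1 : ((k : ℤ) - 1) * N₁
        ≤ ((k : ℤ) - 1) * ((∑ i, (d i - 2)) + r) + (∑ i, ((k : ℤ) - d i)) + s)
    (h2 : ((k : ℤ) - 4) * (∑ i, (d i - 1)) + ((k : ℤ) - 3) * r + s - 2 < (N₁ : ℤ)) :
    ∑ i, (((k : ℤ) ^ 2 - 6 * k + 6) * (d i - 1)) + ((k : ℤ) ^ 2 - 5 * k + 5) * r
      + ((k : ℤ) - 2) * s - 2 * ((k : ℤ) - 1) < 0 := by
  have hD : 0 ≤ ∑ i, (d i - 1) := sum_nonneg fun i _ => by linarith [hd i]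
  rw [sum_sub_two_eq_sum_sub_one_sub_card, sum_const_sub_eq] at h1
  rw [← mul_sum]
  exact lt_zero_of_bounds_on_leaf_count (by exact_mod_cast hk) hD (by positivity) (by positivity)
    (by linarith) h2

theorem stmt7 {ι : Type*} [Fintype ι] (d : ι → ℤ) (hd : ∀ i, 2 ≤ d i)
    (k N₁ r s : ℕ) (hk : 5 ≤ k) (hr : 1 ≤ r)
    (h1 : ((k : ℤ) - 1) * N₁
        ≤ ((k : ℤ) - 1) * ((∑ i, (d i - 2)) + r) + (∑ i, ((k : ℤ) - d i)) + s)
    (h2 : ((k : ℤ) - 4) * (∑ i, (d i - 1)) + ((k : ℤ) - 3) * r + s - 2 < (N₁ : ℤ)) :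
    ∑ i, (((k : ℤ) ^ 2 - 6 * k + 6) * (d i - 1)) + ((k : ℤ) ^ 2 - 5 * k + 5) * r
      + ((k : ℤ) - 2) * s - 2 * ((k : ℤ) - 1) < 0 :=
  stmt7_general d hd k N₁ r s hk h1 h2
end

section
/- Lovász Local Lemma (symmetric form): Let E₁,...,E_n be events in a probability space with Pr(E_i) ≤ p for all i. If each event is mutually independent of all other events except at most d of them, and e·p·(d+1) ≤ 1 (where e is Euler's number), then Pr(⋂_{i=1}^n E_i^c) > 0. -/
/-!
Choose `x = 1 / (d + 2)` (rather than the usual `1 / (d + 1)`, so that `x < 1` also when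
`d = 0`). By strong induction on `S`, conditioned on avoiding every `E j`
with `j ∈ S ∌ i`, the event `E i` has probability at most `x`: drop the at most `d`
neighbours of `i` from `S`, use independence from the rest, and note that re-imposing the
dropped events one by one keeps at least a `(1 - x)` fraction of the measure each time, by
the induction hypothesis. The same peeling over all `n` events gives
`Pr(⋂ i, (E i)ᶜ) ≥ (1 - x) ^ n > 0`, and `e p (d + 1) ≤ 1` is exactly what makes
`p ≤ x (1 - x) ^ d`, since `(1 + 1 / (d + 1)) ^ (d + 1) ≤ e`.
-/

open MeasureTheory ProbabilityTheory Finset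
open scoped ENNReal

namespace LovaszLocalLemma

variable {Ω ι : Type*} {E : ι → Set Ω}

def avoid (E : ι → Set Ω) (S : Finset ι) : Set Ω := ⋂ j ∈ S, (E j)ᶜ

@[simp]
lemma avoid_empty : avoid E ∅ = Set.univ := by simp [avoid]

lemma avoid_insert [DecidableEq ι] (a : ι) (S : Finset ι) :
    avoid E (insert a S) = (E a)ᶜ ∩ avoid E S :=
  Finset.set_biInter_insert a S _

lemma avoid_anti {S T : Finset ι} (h : S ⊆ T) : avoid E T ⊆ avoid E S :=
  Set.biInter_subset_biInter_left h

lemma measurableSet_avoid {m : MeasurableSpace Ω} {S : Finset ι}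
    (h : ∀ j ∈ S, MeasurableSet[m] (E j)) : MeasurableSet[m] (avoid E S) :=
  Finset.measurableSet_biInter S fun j hj => (h j hj).compl

variable [MeasurableSpace Ω] {μ : Measure Ω} {Γ : ι → Finset ι}

lemma measure_inter_avoid_eq_mul_of_indep {i : ι} {S : Finset ι}
    (hindep : Indep (MeasurableSpace.generateFrom {E i})
      (MeasurableSpace.generateFrom {s | ∃ j, j ≠ i ∧ j ∉ Γ i ∧ s = E j}) μ)
    (hi : i ∉ S) (hS : Disjoint S (Γ i)) :
    μ (E i ∩ avoid E S) = μ (E i) * μ (avoid E S) :=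
  (Indep_iff _ _ μ).1 hindep _ _ (MeasurableSpace.measurableSet_generateFrom rfl)
    (measurableSet_avoid fun j hj => MeasurableSpace.measurableSet_generateFrom
      ⟨j, ne_of_mem_of_not_mem hj hi, disjoint_left.1 hS hj, rfl⟩)

lemma one_sub_mul_le_measure_compl_inter {A W : Set Ω} {x : ℝ≥0∞} (hW : μ W ≠ ∞)
    (h : μ (A ∩ W) ≤ x * μ W) : (1 - x) * μ W ≤ μ (Aᶜ ∩ W) :=
  calc (1 - x) * μ W = μ W - x * μ W := by rw [ENNReal.sub_mul fun _ _ => hW, one_mul]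
    _ ≤ μ W - μ (A ∩ W) := tsub_le_tsub_left h _
    _ ≤ μ (W \ (A ∩ W)) := le_measure_sdiff
    _ = μ (Aᶜ ∩ W) := by congr 1; ext; simp [and_comm]

variable [DecidableEq ι] [IsFiniteMeasure μ] {x : ℝ≥0∞}

lemma one_sub_pow_card_mul_le_measure_avoid {U T : Finset ι} (hUT : Disjoint U T)
    (h : ∀ V ⊂ U ∪ T, ∀ i ∉ V, μ (E i ∩ avoid E V) ≤ x * μ (avoid E V)) :
    (1 - x) ^ T.card * μ (avoid E U) ≤ μ (avoid E (U ∪ T)) := by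
  induction T using Finset.induction_on with
  | empty => simp
  | insert a T haT ih =>
    have haU : a ∉ U ∪ T := by
      simpa [haT] using Finset.disjoint_right.1 hUT (mem_insert_self a T)
    have hsub : U ∪ T ⊂ U ∪ insert a T := by
      rw [union_insert]; exact ssubset_insert haU
    rw [union_insert, avoid_insert, card_insert_of_notMem haT, pow_succ', mul_assoc]
    calc (1 - x) * ((1 - x) ^ T.card * μ (avoid E U))
        ≤ (1 - x) * μ (avoid E (U ∪ T)) := by
          gcongr
          exact ih (hUT.mono_right (subset_insert a T)) fun V hV => h V (hV.trans hsub)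
      _ ≤ μ ((E a)ᶜ ∩ avoid E (U ∪ T)) :=
          one_sub_mul_le_measure_compl_inter (measure_ne_top _ _) (h _ hsub a haU)

variable {d : ℕ}

theorem measure_inter_avoid_le_mul (hΓ : ∀ i, (Γ i).card ≤ d)
    (hE : ∀ i, μ (E i) ≤ x * (1 - x) ^ d)
    (hdep : ∀ i (S : Finset ι), i ∉ S → Disjoint S (Γ i) →
      μ (E i ∩ avoid E S) ≤ μ (E i) * μ (avoid E S))
    (S : Finset ι) : ∀ i ∉ S, μ (E i ∩ avoid E S) ≤ x * μ (avoid E S) := by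
  induction S using Finset.strongInduction with
  | H S ih =>
    intro i hi
    have hsplit : S \ Γ i ∪ S ∩ Γ i = S := sdiff_union_inter S (Γ i)
    have hnear : (1 - x) ^ (S ∩ Γ i).card * μ (avoid E (S \ Γ i)) ≤ μ (avoid E S) := by
      have := one_sub_pow_card_mul_le_measure_avoid (disjoint_sdiff_inter S (Γ i))
        fun V hV => ih V (hsplit ▸ hV)
      rwa [hsplit] at this
    calc μ (E i ∩ avoid E S) ≤ μ (E i ∩ avoid E (S \ Γ i)) :=
          measure_mono (Set.inter_subset_inter_right _ (avoid_anti sdiff_subset))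
      _ ≤ μ (E i) * μ (avoid E (S \ Γ i)) :=
          hdep i _ (fun h => hi (mem_sdiff.1 h).1) sdiff_disjoint
      _ ≤ x * (1 - x) ^ (S ∩ Γ i).card * μ (avoid E (S \ Γ i)) := by
          gcongr
          refine (hE i).trans (mul_le_mul_right (pow_le_pow_right_of_le_one' tsub_le_self ?_) x)
          exact (card_le_card inter_subset_right).trans (hΓ i)
      _ ≤ x * μ (avoid E S) := by rw [mul_assoc]; gcongr

theorem one_sub_pow_card_le_measure_avoid [IsProbabilityMeasure μ]
    (hΓ : ∀ i, (Γ i).card ≤ d) (hE : ∀ i, μ (E i) ≤ x * (1 - x) ^ d)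
    (hdep : ∀ i (S : Finset ι), i ∉ S → Disjoint S (Γ i) →
      μ (E i ∩ avoid E S) ≤ μ (E i) * μ (avoid E S))
    (S : Finset ι) : (1 - x) ^ S.card ≤ μ (avoid E S) := by
  simpa using one_sub_pow_card_mul_le_measure_avoid (U := ∅) (disjoint_empty_left S)
    fun V _ => measure_inter_avoid_le_mul hΓ hE hdep V

end LovaszLocalLemma

open LovaszLocalLemma

lemma le_inv_mul_one_sub_inv_pow {p : ℝ} {d : ℕ} (h : Real.exp 1 * p * (d + 1) ≤ 1) :
    p ≤ ((d : ℝ) + 2)⁻¹ * (1 - ((d : ℝ) + 2)⁻¹) ^ d := by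
  have he : (1 + ((d : ℝ) + 1)⁻¹) ^ (d + 1) ≤ Real.exp 1 := by
    exact_mod_cast Real.one_add_inv_pow_le_exp (n := d + 1)
  have hq : 1 - ((d : ℝ) + 2)⁻¹ = (1 + ((d : ℝ) + 1)⁻¹)⁻¹ := by field_simp; ring
  have hr : ((d : ℝ) + 2)⁻¹ = (1 + ((d : ℝ) + 1)⁻¹)⁻¹ / (d + 1) := by field_simp; ring
  rw [hq, hr, div_mul_eq_mul_div, ← pow_succ', inv_pow, le_div_iff₀ (by positivity)]
  calc p * (d + 1) ≤ (Real.exp 1)⁻¹ := by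
        rw [inv_eq_one_div, le_div_iff₀ (Real.exp_pos 1)]
        linarith
    _ ≤ ((1 + ((d : ℝ) + 1)⁻¹) ^ (d + 1))⁻¹ := inv_anti₀ (by positivity) he

theorem stmt17_general {Ω : Type*} [MeasurableSpace Ω] (μ : Measure Ω)
    [IsProbabilityMeasure μ] (n : ℕ) (E : Fin n → Set Ω)
    (p : ℝ) (hp : ∀ i, (μ (E i)).toReal ≤ p)
    (d : ℕ) (Γ : Fin n → Finset (Fin n)) (hΓ : ∀ i, (Γ i).card ≤ d)
    (hindep : ∀ i, Indep (MeasurableSpace.generateFrom {E i})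
        (MeasurableSpace.generateFrom {s | ∃ j, j ≠ i ∧ j ∉ Γ i ∧ s = E j}) μ)
    (hepd : Real.exp 1 * p * (d + 1) ≤ 1) :
    0 < μ (⋂ i, (E i)ᶜ) := by
  set y : ℝ := ((d : ℝ) + 2)⁻¹
  have hy0 : 0 ≤ y := by positivity
  have hy1 : y < 1 := inv_lt_one_of_one_lt₀ (by linarith [d.cast_nonneg (α := ℝ)])
  set x := ENNReal.ofReal y
  have hE : ∀ i, μ (E i) ≤ x * (1 - x) ^ d := fun i =>
    calc μ (E i) ≤ ENNReal.ofReal p := ENNReal.le_ofReal_iff_toReal_le (measure_ne_top _ _)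
          (ENNReal.toReal_nonneg.trans (hp i)) |>.2 (hp i)
      _ ≤ ENNReal.ofReal (y * (1 - y) ^ d) :=
          ENNReal.ofReal_le_ofReal (le_inv_mul_one_sub_inv_pow hepd)
      _ = x * (1 - x) ^ d := by
          rw [ENNReal.ofReal_mul hy0, ENNReal.ofReal_pow (by linarith),
            ENNReal.ofReal_sub 1 hy0, ENNReal.ofReal_one]
  have hbound := one_sub_pow_card_le_measure_avoid hΓ hE
    (fun i _ hi hS => (measure_inter_avoid_eq_mul_of_indep (hindep i) hi hS).le) univ
  calc 0 < (1 - x) ^ (univ : Finset (Fin n)).card :=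
        ENNReal.pow_pos (tsub_pos_of_lt (ENNReal.ofReal_lt_one.2 hy1)) _
    _ ≤ μ (avoid E univ) := hbound
    _ = μ (⋂ i, (E i)ᶜ) := by simp [avoid]

/-- Symmetric Lovász Local Lemma: if each event `E i` has probability at most `p`,
each event is independent (jointly, i.e. of the generated σ-algebra) of all other
events except at most `d` of them, and `e · p · (d + 1) ≤ 1`, then with positive
probability none of the events occurs. -/
theorem stmt17 {Ω : Type*} [MeasurableSpace Ω] (μ : Measure Ω)
    [IsProbabilityMeasure μ] (n : ℕ) (E : Fin n → Set Ω)
    (hE : ∀ i, MeasurableSet (E i)) (p : ℝ) (hp : ∀ i, (μ (E i)).toReal ≤ p)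
    (d : ℕ) (Γ : Fin n → Finset (Fin n)) (hΓ : ∀ i, (Γ i).card ≤ d)
    (hindep : ∀ i, Indep (MeasurableSpace.generateFrom {E i})
        (MeasurableSpace.generateFrom {s | ∃ j, j ≠ i ∧ j ∉ Γ i ∧ s = E j}) μ)
    (hepd : Real.exp 1 * p * (d + 1) ≤ 1) :
    0 < μ (⋂ i, (E i)ᶜ) :=
  stmt17_general μ n E p hp d Γ hΓ hindep hepd
end
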